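/- For every n ≥ 1 and for X = L_α (and likewise X = L_β), the iterated splitting operator satisfies Δ_{n−1}·X = 𝔏_X^[n]·Δ_{n−1}, where 𝔏_X^[n] := ∑_{∅ ≠ A ⊆ Fin n} X^(A). -/

import Mathlib

open Matrix

/-- The Markov generator `L_α = [[-1, 0], [1, 0]]`. -/
noncomputable def Lalpha : Matrix (Fin 2) (Fin 2) ℝ := !![-1, 0; 1, 0]

/-- The Markov generator `L_β = [[0, 1], [0, -1]]`. -/
noncomputable def Lbeta : Matrix (Fin 2) (Fin 2) ℝ := !![0, 1; 0, -1]

/-- `X^(A)`: the operator on the `n`-fold tensor power `(ℝ²)^⊗n` (indexed by functions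
`Fin n → Fin 2`) acting as `X` on the tensor factors in `A` and as the identity elsewhere:
`(X^(A))_{f,g} = (∏_{i ∈ A} X_{f(i),g(i)}) · (∏_{j ∉ A} [f(j) = g(j)])`. -/
noncomputable def opOn {n : ℕ} (X : Matrix (Fin 2) (Fin 2) ℝ) (A : Finset (Fin n)) :
    Matrix (Fin n → Fin 2) (Fin n → Fin 2) ℝ :=
  fun f g => (∏ i ∈ A, X (f i) (g i)) * ∏ j ∈ Aᶜ, (if f j = g j then (1 : ℝ) else 0)

/-- `𝔏_X^[n] := ∑_{∅ ≠ A ⊆ Fin n} X^(A)`. -/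
noncomputable def frakL (n : ℕ) (X : Matrix (Fin 2) (Fin 2) ℝ) :
    Matrix (Fin n → Fin 2) (Fin n → Fin 2) ℝ :=
  ∑ A ∈ Finset.univ.filter (fun A : Finset (Fin n) => A.Nonempty), opOn X A

/-- The iterated splitting operator `Δ_{n−1}`, with `(Δ_{n−1})_{f,k} = 1` iff `f` is the
constant function with value `k`. -/
noncomputable def Delta (n : ℕ) : Matrix (Fin n → Fin 2) (Fin 2) ℝ :=
  fun f k => if f = fun _ => k then 1 else 0

/-! Expanding the product over tensor factors gives `∑_{A ⊆ Fin n} X^(A) = (X + 1)^⊗n`, hence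
`𝔏_X^[n] = (X + 1)^⊗n - 1`. Both generators are of the form `X = P_v - 1`, where `P_v = X + 1`
sends every state to `v` (`v = 1` for `L_α`, `v = 0` for `L_β`). So `(X + 1)^⊗n` sends every
configuration to the constant configuration `v`, and in column `k` both `Δ_{n−1} X` and
`𝔏_X^[n] Δ_{n−1}` have the entry `[f ≡ v] - [f ≡ k]`. -/

section

variable {n : ℕ} (X : Matrix (Fin 2) (Fin 2) ℝ)

theorem opOn_empty : opOn X (∅ : Finset (Fin n)) = 1 := by
  ext f g
  simp [opOn, Matrix.one_apply, Finset.prod_boole, funext_iff]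

theorem sum_opOn_apply (f g : Fin n → Fin 2) :
    (∑ A, opOn X A) f g = ∏ i, (X + 1) (f i) (g i) := by
  simp only [Matrix.add_apply, Matrix.one_apply, Finset.prod_add, Finset.powerset_univ,
    Matrix.sum_apply, opOn, Finset.compl_eq_univ_sdiff]

theorem frakL_eq_sum_opOn_sub_one : frakL n X = ∑ A, opOn X A - 1 := by
  have hfilter : Finset.univ.filter (fun A : Finset (Fin n) => A.Nonempty) =
      Finset.univ.erase ∅ := by
    ext A; simp [Finset.nonempty_iff_ne_empty]
  rw [frakL, hfilter, ← opOn_empty X, eq_sub_iff_add_eq,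
    Finset.sum_erase_add _ _ (Finset.mem_univ _)]

end

theorem mul_Delta_apply {n : ℕ} (M : Matrix (Fin n → Fin 2) (Fin n → Fin 2) ℝ)
    (f : Fin n → Fin 2) (k : Fin 2) : (M * Delta n) f k = M f (fun _ => k) := by
  simp [Matrix.mul_apply, Delta]

theorem Delta_mul_eq_frakL_mul_Delta (n : ℕ) (v : Fin 2) {X : Matrix (Fin 2) (Fin 2) ℝ}
    (hX : X + 1 = of fun i _ => if i = v then 1 else 0) :
    Delta n * X = frakL n X * Delta n := by
  ext f k
  rw [mul_Delta_apply, frakL_eq_sum_opOn_sub_one, Matrix.sub_apply, sum_opOn_apply, hX,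
    eq_sub_of_add_eq hX, Matrix.mul_sub, Matrix.mul_one, Matrix.sub_apply]
  simp [Delta, Matrix.mul_apply, Matrix.one_apply, Finset.prod_boole, funext_iff]

theorem Lalpha_add_one : Lalpha + 1 = of fun i _ => if i = 1 then 1 else 0 := by
  ext i j; fin_cases i <;> fin_cases j <;> simp [Lalpha]

theorem Lbeta_add_one : Lbeta + 1 = of fun i _ => if i = 0 then 1 else 0 := by
  ext i j; fin_cases i <;> fin_cases j <;> simp [Lbeta]

theorem delta_intertwine_general (n : ℕ) :
    Delta n * Lalpha = frakL n Lalpha * Delta n ∧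
    Delta n * Lbeta = frakL n Lbeta * Delta n :=
  ⟨Delta_mul_eq_frakL_mul_Delta n 1 Lalpha_add_one,
    Delta_mul_eq_frakL_mul_Delta n 0 Lbeta_add_one⟩

/-- For every `n ≥ 1`, `Δ_{n−1}·X = 𝔏_X^[n]·Δ_{n−1}` for `X = L_α` and `X = L_β`. -/
theorem delta_intertwine (n : ℕ) (hn : 1 ≤ n) :
    Delta n * Lalpha = frakL n Lalpha * Delta n ∧
    Delta n * Lbeta = frakL n Lbeta * Delta n :=
  delta_intertwine_general n
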